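/- arXiv:1208.5850 — 5 statements merged into one kernel-verified Lean document; each statement's English description precedes it below -/
import Mathlib

section
/- Let K be a complete non-archimedean valued field, c ∈ K and ρ ≥ 0. Define the Gauss seminorm x_{c,ρ} on K[T] by x_{c,ρ}(f) = sup_{n≥0} |f^{(n)}(c)/n!| · ρ^n. Then for any polynomial f ∈ K[T] whose roots (in an algebraic closure) all lie at distance at least d > ρ from c, one has x_{c,ρ}(f) = |f(c)|; i.e., the Gauss norm of f is constant equal to |f(c)| on every disk of radius less than the distance from c to the nearest root of f. -/
/-! The Taylor coefficients of `f` at `c` are the values `f^{(n)}(c)/n!`, so every term of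
`x_{c,ρ}(f)` is bounded by the Gauss norm of radius `ρ` of the Taylor expansion `f(T + c)`. Over an
algebraically closed extension `f = u ∏ (T - α)`, and the Taylor expansion of `T - α` is
`T + (c - α)`, whose Gauss norm is `max ρ |c - α| = |c - α|`. Submultiplicativity of the
nonarchimedean Gauss norm bounds the whole expansion by `|u| ∏ |c - α| = |f(c)|`, and the term
`n = 0` is `|f(c)|` itself. -/

open Polynomial

/-- The Gauss seminorm `x_{c,ρ}` on `K[T]`:
`x_{c,ρ}(f) = sup_n ‖f^{(n)}(c)/n!‖ · ρ^n`, expressed via Hasse derivatives. -/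
noncomputable def gaussSeminorm {K : Type*} [NontriviallyNormedField K]
    (c : K) (ρ : ℝ) (f : Polynomial K) : ℝ :=
  ⨆ n : ℕ, ‖(Polynomial.hasseDeriv n f).eval c‖ * ρ ^ n

namespace Polynomial

theorem taylor_multiset_prod {R : Type*} [CommSemiring R] (r : R) (s : Multiset R[X]) :
    taylor r s.prod = (s.map (taylor r)).prod := by
  simpa using map_multiset_prod (taylorAlgHom r) s

section GaussNorm

variable {R : Type*} [CommRing R] [IsDomain R] {v : AbsoluteValue R ℝ} {ρ : ℝ}

theorem gaussNorm_multiset_prod_le (hna : IsNonarchimedean v) (hρ : 0 ≤ ρ) (s : Multiset R[X]) :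
    s.prod.gaussNorm v ρ ≤ (s.map (gaussNorm v ρ)).prod := by
  induction s using Multiset.induction with
  | empty => rw [Multiset.prod_zero, Multiset.map_zero, Multiset.prod_zero, ← C_1, gaussNorm_C,
      map_one]
  | cons p s ih =>
    rw [Multiset.prod_cons, Multiset.map_cons, Multiset.prod_cons]
    calc (p * s.prod).gaussNorm v ρ ≤ p.gaussNorm v ρ * s.prod.gaussNorm v ρ :=
          gaussNorm_mul_le v hna p s.prod hρ
      _ ≤ p.gaussNorm v ρ * (s.map (gaussNorm v ρ)).prod :=
          mul_le_mul_of_nonneg_left ih (gaussNorm_nonneg v p hρ)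

theorem gaussNorm_taylor_X_sub_C_le (hna : IsNonarchimedean v) (hρ : 0 ≤ ρ) {c α : R}
    (hα : ρ ≤ v (c - α)) : (taylor c (X - C α)).gaussNorm v ρ ≤ v (c - α) := by
  have htaylor : taylor c (X - C α) = monomial 1 1 + C (c - α) := by
    rw [map_sub, taylor_X, taylor_C, C_sub, monomial_one_one_eq_X]
    ring
  calc (taylor c (X - C α)).gaussNorm v ρ
      ≤ max ((monomial 1 (1 : R)).gaussNorm v ρ) ((C (c - α)).gaussNorm v ρ) := by
        rw [htaylor]
        exact isNonarchimedean_gaussNorm v hna hρ _ _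
    _ = v (c - α) := by
      rw [gaussNorm_monomial, gaussNorm_C, map_one, one_mul, pow_one, max_eq_right hα]

theorem gaussNorm_taylor_le_of_splits (hna : IsNonarchimedean v) (hρ : 0 ≤ ρ) {p : R[X]}
    (hp : p.Splits) (c : R) (hroots : ∀ α ∈ p.roots, ρ ≤ v (c - α)) :
    (taylor c p).gaussNorm v ρ ≤ v (p.eval c) := by
  have hsplit := hp.eq_prod_roots
  set u := p.leadingCoeff
  set s := p.roots
  have htaylor : taylor c p = C u * (s.map fun α ↦ taylor c (X - C α)).prod := by
    conv_lhs => rw [hsplit]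
    rw [taylor_mul, taylor_C, taylor_multiset_prod, Multiset.map_map]
    rfl
  have heval : v (p.eval c) = v u * (s.map fun α ↦ v (c - α)).prod := by
    conv_lhs => rw [hsplit]
    simp only [eval_mul, eval_C, eval_multiset_prod, Multiset.map_map, map_mul, map_multiset_prod]
    simp [Function.comp_def]
  rw [htaylor, heval]
  calc _ ≤ (C u).gaussNorm v ρ * (s.map fun α ↦ taylor c (X - C α)).prod.gaussNorm v ρ :=
        gaussNorm_mul_le v hna _ _ hρ
    _ ≤ v u * (s.map fun α ↦ (taylor c (X - C α)).gaussNorm v ρ).prod := by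
      rw [gaussNorm_C]
      refine mul_le_mul_of_nonneg_left ?_ (v.nonneg u)
      exact (gaussNorm_multiset_prod_le hna hρ _).trans_eq (by rw [Multiset.map_map]; rfl)
    _ ≤ v u * (s.map fun α ↦ v (c - α)).prod := by
      refine mul_le_mul_of_nonneg_left ?_ (v.nonneg u)
      exact Multiset.prod_map_le_prod_map₀ _ _ (fun _ _ ↦ gaussNorm_nonneg v _ hρ)
        fun α hα ↦ gaussNorm_taylor_X_sub_C_le hna hρ (hroots α hα)

end GaussNorm

end Polynomial

theorem gaussSeminorm_eq_norm_eval_of_forall_le {K : Type*} [NontriviallyNormedField K] {c : K}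
    {ρ : ℝ} {f : K[X]} (h : ∀ n, ‖(taylor c f).coeff n‖ * ρ ^ n ≤ ‖f.eval c‖) :
    gaussSeminorm c ρ f = ‖f.eval c‖ := by
  simp_rw [gaussSeminorm, ← taylor_coeff]
  refine le_antisymm (ciSup_le h) ?_
  calc ‖f.eval c‖ = ‖(taylor c f).coeff 0‖ * ρ ^ 0 := by rw [taylor_coeff_zero, pow_zero, mul_one]
    _ ≤ _ := le_ciSup ⟨_, Set.forall_mem_range.2 h⟩ 0

theorem gaussSeminorm_eq_of_roots_far_general
    {K L : Type*} [NontriviallyNormedField K] [IsUltrametricDist K]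
    [NontriviallyNormedField L] [IsAlgClosed L] [NormedAlgebra K L]
    (c : K) (ρ d : ℝ) (hρ : 0 ≤ ρ) (hd : ρ < d)
    (f : Polynomial K)
    (hroots : ∀ α ∈ (f.map (algebraMap K L)).roots, d ≤ ‖algebraMap K L c - α‖) :
    gaussSeminorm c ρ f = ‖f.eval c‖ := by
  have : IsUltrametricDist L := IsUltrametricDist.of_normedAlgebra K
  let v : AbsoluteValue L ℝ := IsAbsoluteValue.toAbsoluteValue norm
  have hna : IsNonarchimedean v := IsUltrametricDist.isNonarchimedean_norm
  set φ := algebraMap K L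
  have hgauss : (taylor (φ c) (f.map φ)).gaussNorm v ρ ≤ ‖f.eval c‖ := by
    refine (gaussNorm_taylor_le_of_splits hna hρ (IsAlgClosed.splits _) _
      fun α hα ↦ hd.le.trans (hroots α hα)).trans_eq ?_
    simp only [v, φ, IsAbsoluteValue.toAbsoluteValue_apply, eval_map, eval₂_at_apply,
      norm_algebraMap']
  refine gaussSeminorm_eq_norm_eval_of_forall_le fun n ↦ ?_
  calc ‖(taylor c f).coeff n‖ * ρ ^ n = v ((taylor (φ c) (f.map φ)).coeff n) * ρ ^ n := by
        simp only [v, φ, IsAbsoluteValue.toAbsoluteValue_apply, ← map_taylor, coeff_map,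
          norm_algebraMap']
    _ ≤ _ := le_gaussNorm v _ hρ n
    _ ≤ _ := hgauss

/-- If all roots of `f` (in an algebraically closed isometric extension `L` of `K`)
lie at distance at least `d > ρ` from `c`, then `x_{c,ρ}(f) = |f(c)|`. -/
theorem gaussSeminorm_eq_of_roots_far
    {K L : Type*} [NontriviallyNormedField K] [CompleteSpace K] [IsUltrametricDist K]
    [NontriviallyNormedField L] [IsAlgClosed L] [NormedAlgebra K L]
    (hiso : ∀ a : K, ‖algebraMap K L a‖ = ‖a‖)
    (c : K) (ρ d : ℝ) (hρ : 0 ≤ ρ) (hd : ρ < d)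
    (f : Polynomial K) (hf : f ≠ 0)
    (hroots : ∀ α ∈ (f.map (algebraMap K L)).roots, d ≤ ‖algebraMap K L c - α‖) :
    gaussSeminorm c ρ f = ‖f.eval c‖ :=
  gaussSeminorm_eq_of_roots_far_general c ρ d hρ hd f hroots
end

section
/- Let p be a prime and k an integer with gcd(k,p) = 1. The p-adic radius of convergence of the binomial series Σ_{s≥0} binom(k/p, s) z^s, i.e. liminf_{s→∞} |binom(k/p, s)|_p^{−1/s}, equals p^{−p/(p−1)} = ω^p, where ω = p^{−1/(p−1)}. -/
/-!
Each factor `k/p - j` of the numerator of `binom(k/p, s)` has `p`-adic norm `p`, so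
`|binom(k/p, s)|_p = p ^ (s + v_p(s!))`. Legendre's formula `(p - 1) v_p(s!) = s - S_p(s)`, with
the base-`p` digit sum `S_p(s) = O(log s)`, gives `v_p(s!) / s → 1 / (p - 1)`. Hence the roots
`|binom(k/p, s)|_p ^ (-1/s) = p ^ (-(1 + v_p(s!) / s))` converge to `p ^ (-p / (p - 1))`, which is
therefore also their liminf.
-/

open Filter

/-- The generalized binomial coefficient `binom(x,s) = x(x−1)⋯(x−s+1)/s!` for `x ∈ ℚ`. -/
noncomputable def ratChoose (x : ℚ) (s : ℕ) : ℚ :=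
  (∏ j ∈ Finset.range s, (x - j)) / (Nat.factorial s)

open Topology

theorem Nat.tendsto_log_div_atTop (b : ℕ) :
    Tendsto (fun n : ℕ => (Nat.log b n : ℝ) / n) atTop (𝓝 0) := by
  have hlog : Tendsto (fun n : ℕ => Real.log n / n / Real.log b) atTop (𝓝 0) := by
    simpa using (Real.isLittleO_log_id_atTop.tendsto_div_nhds_zero.comp
      tendsto_natCast_atTop_atTop).div_const (Real.log b)
  refine squeeze_zero (fun n => by positivity) (fun n => ?_) hlog
  rw [div_right_comm, Real.log_div_log]
  gcongr
  exact Real.natLog_le_logb n b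

theorem Nat.digits_sum_le_mul_log {b : ℕ} (hb : 1 < b) (n : ℕ) :
    (b.digits n).sum ≤ (b - 1) * (Nat.log b n + 1) := by
  have hdigit : ∀ d ∈ b.digits n, d ≤ b - 1 := fun d hd =>
    Nat.le_sub_one_of_lt (Nat.digits_lt_base hb hd)
  have hlen : (b.digits n).length ≤ Nat.log b n + 1 :=
    (Nat.digits_length_le_iff hb n).2 (Nat.lt_pow_succ_log_self hb n)
  calc (b.digits n).sum ≤ (b.digits n).length * (b - 1) := by
        simpa using List.sum_le_card_nsmul _ _ hdigit
    _ ≤ (b - 1) * (Nat.log b n + 1) := by rw [mul_comm]; gcongr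

theorem Nat.tendsto_digits_sum_div_atTop {b : ℕ} (hb : 1 < b) :
    Tendsto (fun n : ℕ => ((b.digits n).sum : ℝ) / n) atTop (𝓝 0) := by
  have hlog : Tendsto (fun n : ℕ => ((b : ℝ) - 1) * ((Nat.log b n : ℝ) / n + 1 / n)) atTop
      (𝓝 (((b : ℝ) - 1) * (0 + 0))) :=
    ((Nat.tendsto_log_div_atTop b).add tendsto_one_div_atTop_nhds_zero_nat).const_mul _
  rw [add_zero, mul_zero] at hlog
  refine squeeze_zero (fun n => by positivity) (fun n => ?_) hlog
  rw [← add_div, ← mul_div_assoc]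
  gcongr
  have h : ((b.digits n).sum : ℝ) ≤ ((b - 1 : ℕ) : ℝ) * ((Nat.log b n : ℝ) + 1) := by
    exact_mod_cast Nat.digits_sum_le_mul_log hb n
  rwa [Nat.cast_sub hb.le, Nat.cast_one] at h

theorem tendsto_padicValNat_factorial_div_atTop (p : ℕ) [hp : Fact p.Prime] :
    Tendsto (fun n : ℕ => (padicValNat p n.factorial : ℝ) / n) atTop (𝓝 (1 / ((p : ℝ) - 1))) := by
  have hp1 : (1 : ℝ) < p := mod_cast hp.out.one_lt
  have legendre (n : ℕ) :
      ((p : ℝ) - 1) * padicValNat p n.factorial = n - ((p.digits n).sum : ℝ) := by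
    have h := congrArg (Nat.cast : ℕ → ℝ) (sub_one_mul_padicValNat_factorial (p := p) n)
    rwa [Nat.cast_mul, Nat.cast_sub (Nat.digit_sum_le p n), Nat.cast_sub hp.out.one_le,
      Nat.cast_one] at h
  have hlim := ((tendsto_const_nhds (x := (1 : ℝ))).sub
    (Nat.tendsto_digits_sum_div_atTop hp.out.one_lt)).div_const ((p : ℝ) - 1)
  rw [sub_zero] at hlim
  refine hlim.congr' ?_
  filter_upwards [eventually_ne_atTop 0] with n hn
  have hp' : (p : ℝ) - 1 ≠ 0 := by linarith
  field_simp
  linarith [legendre n]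

theorem Padic.norm_natCast_eq_zpow_neg_padicValNat {p : ℕ} [Fact p.Prime] {n : ℕ} (hn : n ≠ 0) :
    ‖(n : ℚ_[p])‖ = (p : ℝ) ^ (-(padicValNat p n : ℤ)) := by
  rw [Padic.norm_eq_zpow_neg_valuation (Nat.cast_ne_zero.2 hn), Padic.valuation_natCast]

theorem Padic.norm_intCast_div_p_sub_intCast {p : ℕ} [Fact p.Prime] {k : ℤ}
    (hk : ¬(p : ℤ) ∣ k) (j : ℤ) : ‖(k : ℚ_[p]) / p - j‖ = p := by
  have hk_unit : ‖(k : ℚ_[p])‖ = 1 :=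
    le_antisymm (Padic.norm_int_le_one k) (not_lt.1 (mt Padic.norm_intCast_lt_one_iff.1 hk))
  have hkp : ‖(k : ℚ_[p]) / p‖ = p := by
    rw [norm_div, hk_unit, Padic.norm_p, one_div, inv_inv]
  have hj : ‖-(j : ℚ_[p])‖ < ‖(k : ℚ_[p]) / p‖ := by
    rw [norm_neg, hkp]
    exact (Padic.norm_int_le_one j).trans_lt (mod_cast (Fact.out : p.Prime).one_lt)
  rw [sub_eq_add_neg, IsUltrametricDist.norm_add_eq_max_of_norm_ne_norm hj.ne', max_eq_left hj.le,
    hkp]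

theorem norm_ratChoose_intCast_div_p {p : ℕ} [Fact p.Prime] {k : ℤ} (hk : ¬(p : ℤ) ∣ k) (s : ℕ) :
    ‖((ratChoose ((k : ℚ) / p) s : ℚ) : ℚ_[p])‖ = (p : ℝ) ^ (s + padicValNat p s.factorial) := by
  have hfactor (j : ℕ) : ‖(k : ℚ_[p]) / p - j‖ = p := by
    simpa using Padic.norm_intCast_div_p_sub_intCast hk j
  rw [ratChoose]
  push_cast
  rw [norm_div, norm_prod, Finset.prod_congr rfl fun j _ => hfactor j, Finset.prod_const,
    Finset.card_range, Padic.norm_natCast_eq_zpow_neg_padicValNat s.factorial_ne_zero, zpow_neg,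
    div_inv_eq_mul, zpow_natCast, pow_add]

/-- For `p` prime and `p ∤ k`, the `p`-adic radius of convergence
`liminf_s |binom(k/p,s)|_p^{−1/s}` of the binomial series `Σ binom(k/p,s) z^s`
equals `p^{−p/(p−1)} = ω^p`. -/
theorem liminf_radius_binomial_series (p : ℕ) [hp : Fact p.Prime] (k : ℤ)
    (hk : ¬ ((p : ℤ) ∣ k)) :
    Filter.liminf
        (fun s : ℕ => ‖((ratChoose ((k : ℚ) / p) s : ℚ) : ℚ_[p])‖ ^ (-(1 : ℝ) / s)) atTop
      = (p : ℝ) ^ (-(p : ℝ) / (p - 1)) := by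
  have hp1 : (1 : ℝ) < p := mod_cast hp.out.one_lt
  have hexponent : Tendsto (fun s : ℕ => -(1 + (padicValNat p s.factorial : ℝ) / s)) atTop
      (𝓝 (-(p : ℝ) / (p - 1))) := by
    have hp' : (p : ℝ) - 1 ≠ 0 := by linarith
    convert (tendsto_const_nhds.add (tendsto_padicValNat_factorial_div_atTop p)).neg using 2
    field_simp
    ring
  refine (((tendsto_const_nhds (x := (p : ℝ))).rpow hexponent
    (Or.inl (by positivity))).congr' ?_).liminf_eq
  filter_upwards [eventually_ne_atTop 0] with s hs
  rw [norm_ratChoose_intCast_div_p hk, ← Real.rpow_natCast, ← Real.rpow_mul (by positivity)]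
  push_cast
  field_simp
end

section
/- Let r ≥ 1, let i_1 < i < i_2 be integers in {0,…,r}, and suppose h : {0,…,r} → ℝ is convex (non-decreasing slope differences). Define the linear interpolation G := h_{i_1} + (i − i_1)·(h_{i_2} − h_{i_1})/(i_2 − i_1). Then h_i ≤ G. Consequently, for a family of convex functions h(x) : {0,…,r} → ℝ depending on a parameter and whose values at indices i_1 and i_2 are super-harmonic (in the sense of having non-positive finite weighted sums of directional right-derivatives at a given parameter point) with h_i(x_0) = G(x_0) at the base point, the index-i partial height h_i is also super-harmonic at that point. -/
/-!
A sequence with non-decreasing increments lies below each of its chords: on `[i₁, i]` every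
increment is at most the increment at `i`, on `[i, i₂]` at least that, and telescoping gives
`(i₂ - i₁) h i ≤ (i₂ - i) h i₁ + (i - i₁) h i₂`. Applied to each branch `H b s` this inequality
holds for all `s ≥ 0` and is an equality at `s = 0`, so the difference of its two sides has a
maximum at `0` and its right derivative there is non-positive. Summing with the weights `m b`
bounds `(i₂ - i₁) ∑ m b d b i` by a non-negative combination of the super-harmonic sums at `i₁`
and `i₂`.
-/

open Set

section IncrementBounds

variable {h : ℕ → ℝ} {a b : ℕ} {c : ℝ}

lemma sub_le_mul_of_forall_increment_le (hab : a ≤ b)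
    (hc : ∀ j ∈ Finset.Ico a b, h (j + 1) - h j ≤ c) : h b - h a ≤ ((b : ℝ) - a) * c := by
  have := Finset.sum_le_card_nsmul _ _ _ hc
  rwa [Finset.sum_Ico_sub (f := h) hab, Nat.card_Ico, nsmul_eq_mul, Nat.cast_sub hab] at this

lemma mul_le_sub_of_forall_le_increment (hab : a ≤ b)
    (hc : ∀ j ∈ Finset.Ico a b, c ≤ h (j + 1) - h j) : ((b : ℝ) - a) * c ≤ h b - h a := by
  have := Finset.card_nsmul_le_sum _ _ _ hc
  rwa [Finset.sum_Ico_sub (f := h) hab, Nat.card_Ico, nsmul_eq_mul, Nat.cast_sub hab] at this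

end IncrementBounds

lemma monotoneOn_increment_of_convex {h : ℕ → ℝ} {r : ℕ}
    (hconv : ∀ j : ℕ, 1 ≤ j → j < r → h j - h (j - 1) ≤ h (j + 1) - h j) :
    MonotoneOn (fun j ↦ h (j + 1) - h j) (Iio r) :=
  monotoneOn_of_le_succ ordConnected_Iio fun j _ _ hj ↦ by
    simpa using hconv (j + 1) (by omega) hj

lemma mul_le_add_mul_of_monotoneOn_increment {h : ℕ → ℝ} {r i₁ i i₂ : ℕ}
    (hΔ : MonotoneOn (fun j ↦ h (j + 1) - h j) (Iio r))
    (h₁ : i₁ < i) (h₂ : i < i₂) (h₃ : i₂ ≤ r) :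
    ((i₂ : ℝ) - i₁) * h i ≤ ((i₂ : ℝ) - i) * h i₁ + ((i : ℝ) - i₁) * h i₂ := by
  have hi : i ∈ Iio r := by simp only [mem_Iio]; omega
  have hleft : h i - h i₁ ≤ ((i : ℝ) - i₁) * (h (i + 1) - h i) :=
    sub_le_mul_of_forall_increment_le h₁.le fun j hj ↦ by
      simp only [Finset.mem_Ico] at hj
      exact hΔ (by simp only [mem_Iio]; omega) hi (by omega)
  have hright : ((i₂ : ℝ) - i) * (h (i + 1) - h i) ≤ h i₂ - h i :=
    mul_le_sub_of_forall_le_increment h₂.le fun j hj ↦ by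
      simp only [Finset.mem_Ico] at hj
      exact hΔ hi (by simp only [mem_Iio]; omega) hj.1
  have hA : (0 : ℝ) ≤ (i : ℝ) - i₁ := sub_nonneg.2 (by exact_mod_cast h₁.le)
  have hB : (0 : ℝ) ≤ (i₂ : ℝ) - i := sub_nonneg.2 (by exact_mod_cast h₂.le)
  nlinarith [mul_le_mul_of_nonneg_left hleft hB, mul_le_mul_of_nonneg_left hright hA]

section Interpolation

variable {t₁ t t₂ x a b : ℝ}

lemma le_interpolation_iff (ht : t₁ < t₂) :
    x ≤ a + (t - t₁) * (b - a) / (t₂ - t₁) ↔ (t₂ - t₁) * x ≤ (t₂ - t) * a + (t - t₁) * b := by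
  rw [← sub_le_iff_le_add', le_div_iff₀ (sub_pos.2 ht)]
  constructor <;> intro <;> linarith

lemma eq_interpolation_iff (ht : t₁ < t₂) :
    x = a + (t - t₁) * (b - a) / (t₂ - t₁) ↔ (t₂ - t₁) * x = (t₂ - t) * a + (t - t₁) * b := by
  rw [← sub_eq_iff_eq_add', eq_div_iff (sub_pos.2 ht).ne']
  constructor <;> intro <;> linarith

end Interpolation

lemma HasDerivWithinAt.nonpos_of_isMaxOn {f : ℝ → ℝ} {f' a : ℝ}
    (hf : HasDerivWithinAt f f' (Ici a) a) (hmax : IsMaxOn f (Ici a) a) : f' ≤ 0 := by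
  have hone : (1 : ℝ) ∈ posTangentConeAt (Ici a) a :=
    mem_posTangentConeAt_of_segment_subset <| by
      rw [segment_eq_Icc (by linarith)]
      exact Icc_subset_Ici_self
  simpa using hmax.localize.hasFDerivWithinAt_nonpos hf.hasFDerivWithinAt hone

lemma HasDerivWithinAt.mul_le_add_mul_of_le {g g₁ g₂ : ℝ → ℝ} {d d₁ d₂ α β γ a : ℝ}
    (hg : HasDerivWithinAt g d (Ici a) a) (hg₁ : HasDerivWithinAt g₁ d₁ (Ici a) a)
    (hg₂ : HasDerivWithinAt g₂ d₂ (Ici a) a)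
    (hle : ∀ s, a ≤ s → γ * g s ≤ α * g₁ s + β * g₂ s)
    (heq : γ * g a = α * g₁ a + β * g₂ a) : γ * d ≤ α * d₁ + β * d₂ := by
  have hmax : IsMaxOn (fun s ↦ γ * g s - (α * g₁ s + β * g₂ s)) (Ici a) a := fun s hs ↦ by
    simp only [mem_ofPred_eq, heq, sub_self, sub_nonpos]
    exact hle s hs
  have := ((hg.const_mul γ).sub ((hg₁.const_mul α).add (hg₂.const_mul β))).nonpos_of_isMaxOn hmax
  linarith

theorem npHeight_interpolation_superharmonic_general
    (r i₁ i i₂ : ℕ) (h₁ : i₁ < i) (h₂ : i < i₂) (h₃ : i₂ ≤ r)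
    {ι : Type*} [Fintype ι] (m : ι → ℕ)
    (H : ι → ℝ → ℕ → ℝ) (h₀ : ℕ → ℝ)
    (hbase : ∀ b, H b 0 = h₀)
    (hconv : ∀ b, ∀ s : ℝ, 0 ≤ s → ∀ j : ℕ, 1 ≤ j → j < r →
      H b s j - H b s (j - 1) ≤ H b s (j + 1) - H b s j)
    (heq : h₀ i = h₀ i₁ + ((i : ℝ) - i₁) * (h₀ i₂ - h₀ i₁) / ((i₂ : ℝ) - i₁))
    (d : ι → ℕ → ℝ)
    (hd : ∀ b, ∀ j ∈ ({i₁, i, i₂} : Set ℕ),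
      HasDerivWithinAt (fun s => H b s j) (d b j) (Set.Ici 0) 0)
    (hsh₁ : ∑ b, (m b : ℝ) * d b i₁ ≤ 0)
    (hsh₂ : ∑ b, (m b : ℝ) * d b i₂ ≤ 0) :
    (∀ h : ℕ → ℝ,
      (∀ j : ℕ, 1 ≤ j → j < r → h j - h (j - 1) ≤ h (j + 1) - h j) →
      h i ≤ h i₁ + ((i : ℝ) - i₁) * (h i₂ - h i₁) / ((i₂ : ℝ) - i₁)) ∧
    ∑ b, (m b : ℝ) * d b i ≤ 0 := by
  have h₁₂ : (i₁ : ℝ) < i₂ := by exact_mod_cast h₁.trans h₂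
  have hchord (h : ℕ → ℝ) (hc : ∀ j : ℕ, 1 ≤ j → j < r → h j - h (j - 1) ≤ h (j + 1) - h j) :=
    mul_le_add_mul_of_monotoneOn_increment (monotoneOn_increment_of_convex hc) h₁ h₂ h₃
  refine ⟨fun h hc ↦ (le_interpolation_iff h₁₂).2 (hchord h hc), ?_⟩
  have hbranch (b : ι) :
      ((i₂ : ℝ) - i₁) * d b i ≤ ((i₂ : ℝ) - i) * d b i₁ + ((i : ℝ) - i₁) * d b i₂ :=
    (hd b i (by simp)).mul_le_add_mul_of_le (hd b i₁ (by simp)) (hd b i₂ (by simp))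
      (fun s hs ↦ hchord _ (hconv b s hs)) (by rw [hbase]; exact (eq_interpolation_iff h₁₂).1 heq)
  have hsum : ((i₂ : ℝ) - i₁) * ∑ b, (m b : ℝ) * d b i ≤
      ((i₂ : ℝ) - i) * ∑ b, (m b : ℝ) * d b i₁ + ((i : ℝ) - i₁) * ∑ b, (m b : ℝ) * d b i₂ := by
    simp only [Finset.mul_sum, ← Finset.sum_add_distrib]
    gcongr with b
    have := mul_le_mul_of_nonneg_left (hbranch b) (m b).cast_nonneg
    linarith
  have hA : (0 : ℝ) ≤ (i : ℝ) - i₁ := sub_nonneg.2 (by exact_mod_cast h₁.le)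
  have hB : (0 : ℝ) ≤ (i₂ : ℝ) - i := sub_nonneg.2 (by exact_mod_cast h₂.le)
  have hS : ((i₂ : ℝ) - i₁) * ∑ b, (m b : ℝ) * d b i ≤ 0 := hsum.trans <|
    add_nonpos (mul_nonpos_of_nonneg_of_nonpos hB hsh₁) (mul_nonpos_of_nonneg_of_nonpos hA hsh₂)
  exact nonpos_of_mul_nonpos_right hS (sub_pos.2 h₁₂)

/-- Interpolation of partial heights of convergence Newton polygons, and the resulting
super-harmonicity at non-vertex indices: (1) any convex `h : {0,…,r} → ℝ` satisfies
`h i ≤ h i₁ + (i − i₁)(h i₂ − h i₁)/(i₂ − i₁)` for `i₁ < i < i₂ ≤ r`; (2) for a family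
`H b s : {0,…,r} → ℝ` of convex functions (branches `b` with multiplicities `m b`,
parameter `s ≥ 0`, common value `h₀` at `s = 0`), if `h₀ i` equals the linear
interpolation of `h₀` between `i₁` and `i₂` and the heights at indices `i₁` and `i₂`
are super-harmonic (non-positive weighted sums of right derivatives at `s = 0`), then
the index-`i` height is super-harmonic as well. -/
theorem npHeight_interpolation_superharmonic
    (r i₁ i i₂ : ℕ) (h₁ : i₁ < i) (h₂ : i < i₂) (h₃ : i₂ ≤ r)
    {ι : Type*} [Fintype ι] (m : ι → ℕ) (hm : ∀ b, 0 < m b)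
    (H : ι → ℝ → ℕ → ℝ) (h₀ : ℕ → ℝ)
    (hbase : ∀ b, H b 0 = h₀)
    (hconv : ∀ b, ∀ s : ℝ, 0 ≤ s → ∀ j : ℕ, 1 ≤ j → j < r →
      H b s j - H b s (j - 1) ≤ H b s (j + 1) - H b s j)
    (heq : h₀ i = h₀ i₁ + ((i : ℝ) - i₁) * (h₀ i₂ - h₀ i₁) / ((i₂ : ℝ) - i₁))
    (d : ι → ℕ → ℝ)
    (hd : ∀ b, ∀ j ∈ ({i₁, i, i₂} : Set ℕ),
      HasDerivWithinAt (fun s => H b s j) (d b j) (Set.Ici 0) 0)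
    (hsh₁ : ∑ b, (m b : ℝ) * d b i₁ ≤ 0)
    (hsh₂ : ∑ b, (m b : ℝ) * d b i₂ ≤ 0) :
    (∀ h : ℕ → ℝ,
      (∀ j : ℕ, 1 ≤ j → j < r → h j - h (j - 1) ≤ h (j + 1) - h j) →
      h i ≤ h i₁ + ((i : ℝ) - i₁) * (h i₂ - h i₁) / ((i₂ : ℝ) - i₁)) ∧
    ∑ b, (m b : ℝ) * d b i ≤ 0 :=
  npHeight_interpolation_superharmonic_general r i₁ i i₂ h₁ h₂ h₃ m H h₀ hbase hconv heq d hd hsh₁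
    hsh₂
end

section
/- Let K be a complete non-archimedean field and let x_{c,ρ} denote the Gauss seminorm on K[T]. Then for any c ∈ K and ρ, σ ≥ 0, the Gauss point obtained by 'moving up' by σ from x_{c,ρ} satisfies: the seminorm λ(σ) defined by λ(σ)(f) := sup_{n≥0} x_{c,ρ}(f^{(n)}/n!) · σ^n equals the Gauss seminorm x_{c, max(ρ,σ)}. In particular λ(σ) = x_{c,ρ} whenever σ ≤ ρ. -/
open Polynomial

/-- The point `λ_x(σ)` at distance `σ` above the point `x` toward infinity:
`λ_x(σ)(f) := sup_n x(f^{(n)}/n!) · σ^n`. -/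
noncomputable def lambdaPoint {K : Type*} [NontriviallyNormedField K]
    (x : Polynomial K → ℝ) (σ : ℝ) (f : Polynomial K) : ℝ :=
  ⨆ n : ℕ, x (Polynomial.hasseDeriv n f) * σ ^ n

/-!
Since `∂_m ∘ ∂_n = C(m+n, m) • ∂_{m+n}` for Hasse derivatives and integers have norm at most `1`
in a non-archimedean field, every term `‖∂_m ∂_n f(c)‖ ρ^m σ^n` of the double supremum defining
`λ_{x_{c,ρ}}(σ)(f)` is at most `‖∂_{m+n} f(c)‖ max(ρ,σ)^{m+n}`. Conversely, the `n = 0` terms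
recover `x_{c,ρ}(f)` and the `m = 0` terms recover `x_{c,σ}(f)`.
-/

lemma bddAbove_range_hasseDeriv {R : Type*} [Semiring R] {g : R[X] → ℝ} (hg : g 0 = 0)
    (f : R[X]) (r : ℝ) :
    BddAbove (Set.range fun n : ℕ => g (hasseDeriv n f) * r ^ n) := by
  refine (tendsto_atTop_of_eventually_const (i₀ := f.natDegree + 1) (x := 0)
    fun n hn => ?_).bddAbove_range
  rw [hasseDeriv_eq_zero_of_lt_natDegree f n hn, hg, zero_mul]

section

variable {K : Type*} [NontriviallyNormedField K]

lemma bddAbove_range_gaussSeminorm (c : K) (ρ : ℝ) (f : K[X]) :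
    BddAbove (Set.range fun n : ℕ => ‖(hasseDeriv n f).eval c‖ * ρ ^ n) :=
  bddAbove_range_hasseDeriv (g := fun p => ‖p.eval c‖) (by simp) f ρ

lemma norm_eval_hasseDeriv_mul_le_gaussSeminorm (c : K) (ρ : ℝ) (f : K[X]) (n : ℕ) :
    ‖(hasseDeriv n f).eval c‖ * ρ ^ n ≤ gaussSeminorm c ρ f :=
  le_ciSup (bddAbove_range_gaussSeminorm c ρ f) n

lemma norm_eval_le_gaussSeminorm (c : K) (ρ : ℝ) (f : K[X]) : ‖f.eval c‖ ≤ gaussSeminorm c ρ f := by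
  simpa using norm_eval_hasseDeriv_mul_le_gaussSeminorm c ρ f 0

lemma gaussSeminorm_zero (c : K) (ρ : ℝ) : gaussSeminorm c ρ (0 : K[X]) = 0 := by
  simp [gaussSeminorm]

lemma le_lambdaPoint {x : K[X] → ℝ} (hx : x 0 = 0) (σ : ℝ) (f : K[X]) (n : ℕ) :
    x (hasseDeriv n f) * σ ^ n ≤ lambdaPoint x σ f :=
  le_ciSup (bddAbove_range_hasseDeriv hx f σ) n

lemma norm_eval_hasseDeriv_hasseDeriv_le [IsUltrametricDist K] (c : K) (f : K[X]) (m n : ℕ) :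
    ‖(hasseDeriv m (hasseDeriv n f)).eval c‖ ≤ ‖(hasseDeriv (m + n) f).eval c‖ := by
  have hcomp : hasseDeriv m (hasseDeriv n f) = (m + n).choose m • hasseDeriv (m + n) f :=
    LinearMap.congr_fun (hasseDeriv_comp m n) f
  rw [hcomp, eval_smul, nsmul_eq_mul, norm_mul]
  exact mul_le_of_le_one_left (norm_nonneg _) (IsUltrametricDist.norm_natCast_le_one K _)

lemma lambdaPoint_gaussSeminorm_le [IsUltrametricDist K] (c : K) {ρ σ : ℝ} (hρ : 0 ≤ ρ)
    (hσ : 0 ≤ σ) (f : K[X]) :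
    lambdaPoint (gaussSeminorm c ρ) σ f ≤ gaussSeminorm c (max ρ σ) f := by
  refine ciSup_le fun n => ?_
  rw [gaussSeminorm, Real.iSup_mul_of_nonneg (pow_nonneg hσ n)]
  refine ciSup_le fun m => ?_
  have hpow : ρ ^ m * σ ^ n ≤ max ρ σ ^ (m + n) := by
    rw [pow_add]
    gcongr
    exacts [le_max_left _ _, le_max_right _ _]
  calc ‖(hasseDeriv m (hasseDeriv n f)).eval c‖ * ρ ^ m * σ ^ n
      ≤ ‖(hasseDeriv (m + n) f).eval c‖ * max ρ σ ^ (m + n) := by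
        rw [mul_assoc]
        gcongr
        exact norm_eval_hasseDeriv_hasseDeriv_le c f m n
    _ ≤ gaussSeminorm c (max ρ σ) f := norm_eval_hasseDeriv_mul_le_gaussSeminorm c _ f _

lemma gaussSeminorm_le_lambdaPoint (c : K) {ρ σ : ℝ} (hσ : 0 ≤ σ) (f : K[X]) :
    gaussSeminorm c (max ρ σ) f ≤ lambdaPoint (gaussSeminorm c ρ) σ f := by
  refine ciSup_le fun k => ?_
  rcases max_cases ρ σ with ⟨hmax, -⟩ | ⟨hmax, -⟩ <;> rw [hmax]
  · calc ‖(hasseDeriv k f).eval c‖ * ρ ^ k ≤ gaussSeminorm c ρ f :=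
          norm_eval_hasseDeriv_mul_le_gaussSeminorm c ρ f k
      _ ≤ lambdaPoint (gaussSeminorm c ρ) σ f := by
          simpa using le_lambdaPoint (gaussSeminorm_zero c ρ) σ f 0
  · calc ‖(hasseDeriv k f).eval c‖ * σ ^ k ≤ gaussSeminorm c ρ (hasseDeriv k f) * σ ^ k := by
          gcongr
          exact norm_eval_le_gaussSeminorm c ρ _
      _ ≤ lambdaPoint (gaussSeminorm c ρ) σ f := le_lambdaPoint (gaussSeminorm_zero c ρ) σ f k

end

theorem lambdaPoint_gaussSeminorm_general
    {K : Type*} [NontriviallyNormedField K] [IsUltrametricDist K]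
    (c : K) (ρ σ : ℝ) (hρ : 0 ≤ ρ) (hσ : 0 ≤ σ) :
    (∀ f : Polynomial K,
      lambdaPoint (gaussSeminorm c ρ) σ f = gaussSeminorm c (max ρ σ) f) ∧
    (σ ≤ ρ → ∀ f : Polynomial K,
      lambdaPoint (gaussSeminorm c ρ) σ f = gaussSeminorm c ρ f) := by
  have key : ∀ f : K[X], lambdaPoint (gaussSeminorm c ρ) σ f = gaussSeminorm c (max ρ σ) f :=
    fun f => (lambdaPoint_gaussSeminorm_le c hρ hσ f).antisymm (gaussSeminorm_le_lambdaPoint c hσ f)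
  exact ⟨key, fun hσρ f => by rw [key f, max_eq_left hσρ]⟩

/-- Moving up by `σ` from the Gauss point `x_{c,ρ}` gives the Gauss point
`x_{c, max(ρ,σ)}`; in particular `λ_{x_{c,ρ}}(σ) = x_{c,ρ}` whenever `σ ≤ ρ`. -/
theorem lambdaPoint_gaussSeminorm
    {K : Type*} [NontriviallyNormedField K] [CompleteSpace K] [IsUltrametricDist K]
    (c : K) (ρ σ : ℝ) (hρ : 0 ≤ ρ) (hσ : 0 ≤ σ) :
    (∀ f : Polynomial K,
      lambdaPoint (gaussSeminorm c ρ) σ f = gaussSeminorm c (max ρ σ) f) ∧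
    (σ ≤ ρ → ∀ f : Polynomial K,
      lambdaPoint (gaussSeminorm c ρ) σ f = gaussSeminorm c ρ f) :=
  lambdaPoint_gaussSeminorm_general c ρ σ hρ hσ
end

section
/- Let p be a prime, K a complete non-archimedean field of mixed characteristic (0,p) containing the p-th roots of unity, and let ζ ≠ 1 be a primitive p-th root of unity. For c ∈ K and ρ ≥ 0, the Gauss seminorms x_{c,ρ} and x_{ζc,ρ} on K[T] coincide if and only if ρ ≥ ω·|c|, where ω = |p|^{1/(p−1)}. Consequently, the fiber of the Frobenius map T ↦ T^p over the Gauss point x_{c^p, ρ'} consists of a single Gauss point when ψ(|c|,ρ') ≥ ω|c| and of p distinct Gauss points {x_{ζ^k c, ψ(|c|,ρ')} : 0 ≤ k < p} otherwise. -/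
open Polynomial

section Aux

variable {K : Type*} [NontriviallyNormedField K]

lemma gauss_bddAbove (c : K) (ρ : ℝ) (f : Polynomial K) :
    BddAbove (Set.range fun n : ℕ => ‖(Polynomial.hasseDeriv n f).eval c‖ * ρ ^ n) := by
  classical
  refine ⟨(Finset.range (f.natDegree + 1)).sup' (by simp)
    (fun n => ‖(Polynomial.hasseDeriv n f).eval c‖ * ρ ^ n), ?_⟩
  rintro x ⟨n, rfl⟩
  show ‖(Polynomial.hasseDeriv n f).eval c‖ * ρ ^ n ≤ _
  by_cases h : n ≤ f.natDegree
  · exact Finset.le_sup' (fun n => ‖(Polynomial.hasseDeriv n f).eval c‖ * ρ ^ n)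
      (Finset.mem_range.mpr (Nat.lt_succ_of_le h))
  · rw [Polynomial.hasseDeriv_eq_zero_of_lt_natDegree f n (lt_of_not_ge h)]
    simp only [Polynomial.eval_zero, norm_zero, zero_mul]
    calc (0:ℝ) ≤ ‖(Polynomial.hasseDeriv 0 f).eval c‖ * ρ ^ 0 := by
          simpa using norm_nonneg _
      _ ≤ _ := Finset.le_sup' (fun n => ‖(Polynomial.hasseDeriv n f).eval c‖ * ρ ^ n)
          (Finset.mem_range.mpr (Nat.succ_pos _))

lemma gauss_le_of_dist_le [IsUltrametricDist K] {c c' : K} {ρ : ℝ} (hρ : 0 ≤ ρ)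
    (h : ‖c' - c‖ ≤ ρ) (f : Polynomial K) :
    gaussSeminorm c' ρ f ≤ gaussSeminorm c ρ f := by
  apply ciSup_le
  intro m
  set g := Polynomial.taylor c f with hg
  have h1 : (Polynomial.hasseDeriv m g).eval (c' - c) = (Polynomial.hasseDeriv m f).eval c' := by
    rw [← Polynomial.taylor_coeff, ← Polynomial.taylor_coeff, Polynomial.taylor_taylor]
    congr 2
    ring
  rw [← h1]
  set d := c' - c with hd
  have hdeg : (Polynomial.hasseDeriv m g).natDegree < g.natDegree + 1 :=
    Nat.lt_succ_of_le ((Polynomial.natDegree_hasseDeriv_le g m).trans (Nat.sub_le _ _))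
  rw [Polynomial.eval_eq_sum_range' hdeg]
  obtain ⟨i, _, hi⟩ := IsUltrametricDist.exists_norm_finset_sum_le
    (Finset.range (g.natDegree + 1)) (fun i => (Polynomial.hasseDeriv m g).coeff i * d ^ i)
  have step1 : ‖(Polynomial.hasseDeriv m g).coeff i * d ^ i‖ ≤ ‖g.coeff (i + m)‖ * ρ ^ i := by
    rw [Polynomial.hasseDeriv_coeff, norm_mul, norm_mul, norm_pow]
    have h2 : ‖(((i + m).choose m : ℕ) : K)‖ ≤ 1 := IsUltrametricDist.norm_natCast_le_one K _
    have h3 : ‖d‖ ^ i ≤ ρ ^ i := pow_le_pow_left₀ (norm_nonneg d) h i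
    calc ‖(((i + m).choose m : ℕ) : K)‖ * ‖g.coeff (i + m)‖ * ‖d‖ ^ i
        ≤ 1 * ‖g.coeff (i + m)‖ * ρ ^ i := by
          apply mul_le_mul (mul_le_mul_of_nonneg_right h2 (norm_nonneg _)) h3
            (pow_nonneg (norm_nonneg d) i)
            (by positivity)
      _ = ‖g.coeff (i + m)‖ * ρ ^ i := by rw [one_mul]
  have step2 : ‖g.coeff (i + m)‖ * ρ ^ (i + m)
      ≤ ⨆ n : ℕ, ‖(Polynomial.hasseDeriv n f).eval c‖ * ρ ^ n := by
    have := le_ciSup (gauss_bddAbove c ρ f) (i + m)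
    rwa [← Polynomial.taylor_coeff, ← hg] at this
  calc ‖∑ j ∈ Finset.range (g.natDegree + 1), (Polynomial.hasseDeriv m g).coeff j * d ^ j‖ * ρ ^ m
      ≤ ‖(Polynomial.hasseDeriv m g).coeff i * d ^ i‖ * ρ ^ m :=
        mul_le_mul_of_nonneg_right hi (pow_nonneg hρ m)
    _ ≤ (‖g.coeff (i + m)‖ * ρ ^ i) * ρ ^ m :=
        mul_le_mul_of_nonneg_right step1 (pow_nonneg hρ m)
    _ = ‖g.coeff (i + m)‖ * ρ ^ (i + m) := by rw [mul_assoc, ← pow_add]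
    _ ≤ _ := step2

lemma gauss_linear (c a : K) {ρ : ℝ} (hρ : 0 ≤ ρ) :
    gaussSeminorm c ρ (Polynomial.X - Polynomial.C a) = max ‖c - a‖ ρ := by
  have hterm : ∀ n : ℕ,
      ‖(Polynomial.hasseDeriv n (Polynomial.X - Polynomial.C a)).eval c‖ * ρ ^ n
      = if n = 0 then ‖c - a‖ else if n = 1 then ρ else 0 := by
    intro n
    match n with
    | 0 => simp [Polynomial.hasseDeriv_zero]
    | 1 => simp [Polynomial.hasseDeriv_one]
    | (n+2) =>
      rw [Polynomial.hasseDeriv_eq_zero_of_lt_natDegree]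
      · simp
      · rw [Polynomial.natDegree_X_sub_C]; omega
  unfold gaussSeminorm
  apply le_antisymm
  · apply ciSup_le
    intro n
    rw [hterm]
    split_ifs
    · exact le_max_left _ _
    · exact le_max_right _ _
    · exact le_trans hρ (le_max_right _ _)
  · apply max_le
    · calc ‖c - a‖ = ‖(Polynomial.hasseDeriv 0 (Polynomial.X - Polynomial.C a)).eval c‖ * ρ ^ 0 := by
            rw [hterm]; simp
        _ ≤ _ := le_ciSup (gauss_bddAbove c ρ _) 0
    · calc ρ = ‖(Polynomial.hasseDeriv 1 (Polynomial.X - Polynomial.C a)).eval c‖ * ρ ^ 1 := by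
            rw [hterm]; simp
        _ ≤ _ := le_ciSup (gauss_bddAbove c ρ _) 1

lemma gauss_eq_iff [IsUltrametricDist K] {c c' : K} {ρ : ℝ} (hρ : 0 ≤ ρ) :
    (∀ f : Polynomial K, gaussSeminorm c ρ f = gaussSeminorm c' ρ f) ↔ ‖c - c'‖ ≤ ρ := by
  constructor
  · intro h
    have h1 := h (Polynomial.X - Polynomial.C c')
    rw [gauss_linear c c' hρ, gauss_linear c' c' hρ, sub_self, norm_zero,
      max_eq_right hρ] at h1
    exact max_eq_right_iff.mp h1
  · intro h f
    refine le_antisymm (gauss_le_of_dist_le hρ ?_ f) (gauss_le_of_dist_le hρ ?_ f)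
    · exact h
    · rwa [norm_sub_rev] at h

lemma norm_pow_sub_one_le [IsUltrametricDist K] {x : K} (hx : ‖x‖ ≤ 1) (n : ℕ) :
    ‖x ^ n - 1‖ ≤ ‖x - 1‖ := by
  rw [← geom_sum_mul x n, norm_mul]
  have hsum : ‖∑ i ∈ Finset.range n, x ^ i‖ ≤ 1 :=
    IsUltrametricDist.norm_sum_le_of_forall_le_of_nonneg zero_le_one
      (fun i _ => by rw [norm_pow]; exact pow_le_one₀ (norm_nonneg x) hx)
  nlinarith [norm_nonneg (x - 1), norm_nonneg (∑ i ∈ Finset.range n, x ^ i)]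

end Aux

/-- Let `K` be complete of mixed characteristic `(0,p)` containing a primitive `p`-th
root of unity `ζ ≠ 1`, and `ω = |p|^{1/(p−1)}`. Then `x_{c,ρ} = x_{ζc,ρ}` iff
`ρ ≥ ω·|c|`. Consequently, with `ρ = ψ(|c|,ρ') = min((ρ')^{1/p}, ρ'/(|p||c|^{p−1}))`,
the fiber of the Frobenius `T ↦ T^p` over the Gauss point `x_{c^p,ρ'}` consists of the
single Gauss point `x_{c,ρ}` if `ρ ≥ ω|c|`, and of the `p` pairwise distinct Gauss
points `x_{ζ^k c, ρ}`, `0 ≤ k < p`, otherwise. -/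
theorem frobenius_fiber_gauss_points
    {K : Type*} [NontriviallyNormedField K] [CompleteSpace K] [IsUltrametricDist K]
    [CharZero K] (p : ℕ) (hp : p.Prime) (hpK : ‖(p : K)‖ < 1)
    (ζ : K) (hζ : IsPrimitiveRoot ζ p) (hζ1 : ζ ≠ 1)
    (c : K) (ρ ρ' : ℝ) (hρ : 0 ≤ ρ) (hρ' : 0 ≤ ρ') :
    ((∀ f : Polynomial K, gaussSeminorm c ρ f = gaussSeminorm (ζ * c) ρ f) ↔
      ‖(p : K)‖ ^ ((1 : ℝ) / (p - 1)) * ‖c‖ ≤ ρ) ∧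
    (ρ = min (ρ' ^ ((1 : ℝ) / p)) (ρ' / (‖(p : K)‖ * ‖c‖ ^ (p - 1))) →
      ((‖(p : K)‖ ^ ((1 : ℝ) / (p - 1)) * ‖c‖ ≤ ρ →
        ∀ k : ℕ, ∀ f : Polynomial K,
          gaussSeminorm (ζ ^ k * c) ρ f = gaussSeminorm c ρ f) ∧
       (ρ < ‖(p : K)‖ ^ ((1 : ℝ) / (p - 1)) * ‖c‖ →
        Function.Injective fun k : Fin p => gaussSeminorm (ζ ^ (k : ℕ) * c) ρ))) := by
  haveI : Fact p.Prime := ⟨hp⟩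
  haveI : NeZero p := ⟨hp.ne_zero⟩
  -- norms of roots of unity
  have hnorm1 : ∀ a : K, a ^ p = 1 → ‖a‖ = 1 := by
    intro a ha
    have h1 : ‖a‖ ^ p = 1 := by rw [← norm_pow, ha, norm_one]
    rcases lt_trichotomy ‖a‖ 1 with h | h | h
    · exact absurd h1 (ne_of_lt (pow_lt_one₀ (norm_nonneg a) h hp.ne_zero))
    · exact h
    · exact absurd h1.symm (ne_of_lt (one_lt_pow₀ h hp.ne_zero))
  have key : ∀ a b : K, IsPrimitiveRoot a p → IsPrimitiveRoot b p → ‖b - 1‖ ≤ ‖a - 1‖ := by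
    intro a b ha hb
    obtain ⟨i, _, rfl⟩ := ha.eq_pow_of_pow_eq_one hb.pow_eq_one
    exact norm_pow_sub_one_le (le_of_eq (hnorm1 a ha.pow_eq_one)) i
  have key' : ∀ b : K, IsPrimitiveRoot b p → ‖b - 1‖ = ‖ζ - 1‖ := fun b hb =>
    le_antisymm (key ζ b hζ hb) (key b ζ hb hζ)
  -- ‖p‖ = ‖ζ-1‖^(p-1)
  have hev : (p : K) = ∏ μ ∈ primitiveRoots p K, (1 - μ) := by
    have h1 := Polynomial.eval_one_cyclotomic_prime (R := K) (p := p)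
    rw [Polynomial.cyclotomic_eq_prod_X_sub_primitiveRoots hζ, Polynomial.eval_prod] at h1
    simp only [Polynomial.eval_sub, Polynomial.eval_X, Polynomial.eval_C,
      Polynomial.eval_one] at h1
    exact h1.symm
  have hnormp : ‖(p : K)‖ = ‖ζ - 1‖ ^ (p - 1) := by
    rw [hev, norm_prod]
    have hc : ∀ μ ∈ primitiveRoots p K, ‖1 - μ‖ = ‖ζ - 1‖ := fun μ hμ => by
      rw [norm_sub_rev]
      exact key' μ (isPrimitiveRoot_of_mem_primitiveRoots hμ)
    rw [Finset.prod_congr rfl hc, Finset.prod_const, hζ.card_primitiveRoots,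
      Nat.totient_prime hp]
  have homega : ‖(p : K)‖ ^ ((1 : ℝ) / (p - 1)) = ‖ζ - 1‖ := by
    have hp1 : (1:ℝ) < (p:ℝ) := by exact_mod_cast hp.one_lt
    rw [hnormp, ← Real.rpow_natCast (‖ζ - 1‖) (p - 1), ← Real.rpow_mul (norm_nonneg _),
      Nat.cast_sub hp.one_le, Nat.cast_one, mul_one_div, div_self (by linarith),
      Real.rpow_one]
  -- ‖ζ^k - 1‖ = ‖ζ - 1‖ for p ∤ k
  have hknorm : ∀ k : ℕ, ¬ p ∣ k → ‖ζ ^ k - 1‖ = ‖ζ - 1‖ := by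
    intro k hk
    exact key' _ (hζ.pow_of_coprime k ((hp.coprime_iff_not_dvd.mpr hk).symm))
  constructor
  · rw [homega]
    constructor
    · intro h
      have h1 := (gauss_eq_iff hρ).mp h
      calc ‖ζ - 1‖ * ‖c‖ = ‖c - ζ * c‖ := by
            rw [show c - ζ * c = (1 - ζ) * c by ring, norm_mul, norm_sub_rev]
        _ ≤ ρ := h1
    · intro h
      apply (gauss_eq_iff hρ).mpr
      calc ‖c - ζ * c‖ = ‖ζ - 1‖ * ‖c‖ := by
            rw [show c - ζ * c = (1 - ζ) * c by ring, norm_mul, norm_sub_rev]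
        _ ≤ ρ := h
  · intro _
    rw [homega]
    constructor
    · intro h k f
      have hd : ‖ζ ^ k * c - c‖ ≤ ρ := by
        rw [show ζ ^ k * c - c = (ζ ^ k - 1) * c by ring, norm_mul]
        by_cases hk : p ∣ k
        · rw [(hζ.pow_eq_one_iff_dvd k).mpr hk]
          simpa using hρ
        · rw [hknorm k hk]; exact h
      exact (gauss_eq_iff hρ).mpr hd f
    · intro h k j hkj
      have hfun : ∀ f : Polynomial K,
          gaussSeminorm (ζ ^ (k : ℕ) * c) ρ f = gaussSeminorm (ζ ^ (j : ℕ) * c) ρ f :=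
        fun f => congrFun hkj f
      have hd := (gauss_eq_iff hρ).mp hfun
      by_contra hne
      have habs : ∀ a b : ℕ, a < b → b < p → ‖ζ ^ b - ζ ^ a‖ = ‖ζ - 1‖ := by
        intro a b hab hbp
        have hsplit : ζ ^ b - ζ ^ a = ζ ^ a * (ζ ^ (b - a) - 1) := by
          rw [mul_sub, ← pow_add, mul_one]
          congr 2
          omega
        rw [hsplit, norm_mul, norm_pow, hnorm1 ζ hζ.pow_eq_one, one_pow, one_mul]
        apply hknorm (b - a)
        intro hdvd
        have h1 : 0 < b - a := by omega
        have h2 : b - a < p := by omega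
        exact absurd (Nat.le_of_dvd h1 hdvd) (by omega)
      have hnkj : ‖ζ ^ (k : ℕ) * c - ζ ^ (j : ℕ) * c‖ = ‖ζ - 1‖ * ‖c‖ := by
        rw [show ζ ^ (k : ℕ) * c - ζ ^ (j : ℕ) * c = (ζ ^ (k : ℕ) - ζ ^ (j : ℕ)) * c by ring,
          norm_mul]
        rcases lt_or_gt_of_ne (fun hkj' : (k : ℕ) = (j : ℕ) => hne (Fin.ext hkj')) with hlt | hlt
        · rw [norm_sub_rev, habs _ _ hlt j.2]
        · rw [habs _ _ hlt k.2]
      rw [hnkj] at hd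
      exact absurd hd (not_le.mpr h)
end
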